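/- arXiv:1007.5394 — 2 statements merged into one kernel-verified Lean document; each statement's English description precedes it below -/
import Mathlib

section
/- For q = 2^(2n+1) and r = 2^(n+1) (so r^2 = 2q), the identity q^4 − q^2 + 1 = (q^2 + rq + q + r + 1)(q^2 − rq + q − r + 1) holds, and gcd(q^2 + rq + q + r + 1, q^2 − rq + q − r + 1) divides q^3 − 1. -/
theorem stmt_9 (n : ℕ) (hn : 1 ≤ n) (q r : ℤ)
    (hq : q = 2 ^ (2 * n + 1)) (hr : r = 2 ^ (n + 1)) :
    q ^ 4 - q ^ 2 + 1 =
      (q ^ 2 + r * q + q + r + 1) * (q ^ 2 - r * q + q - r + 1) ∧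
    (Int.gcd (q ^ 2 + r * q + q + r + 1) (q ^ 2 - r * q + q - r + 1) : ℤ) ∣
      q ^ 3 - 1 := by
  have hr2 : r ^ 2 = 2 * q := by
    rw [hq, hr, ← pow_mul]; ring_nf
  constructor
  · nlinarith [hr2]
  · set a := q ^ 2 + r * q + q + r + 1 with ha
    set b := q ^ 2 - r * q + q - r + 1 with hb
    set g : ℤ := (Int.gcd a b : ℤ) with hg
    have h1 : g ∣ a := Int.gcd_dvd_left a b
    have h2 : g ∣ b := Int.gcd_dvd_right a b
    have hsum : g ∣ 2 * (q ^ 2 + q + 1) := by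
      have := dvd_add h1 h2; rw [show 2 * (q ^ 2 + q + 1) = a + b by rw [ha, hb]; ring]; exact this
    have hdiff : g ∣ 2 * (r * (q + 1)) := by
      have := dvd_sub h1 h2; rw [show 2 * (r * (q + 1)) = a - b by rw [ha, hb]; ring]; exact this
    -- a is odd
    have hq2 : (2:ℤ) ∣ q := by rw [hq]; exact dvd_pow_self 2 (by omega)
    have hr2' : (2:ℤ) ∣ r := by rw [hr]; exact dvd_pow_self 2 (by omega)
    have hsq : (2:ℤ) ∣ q ^ 2 := dvd_pow hq2 (by omega)
    have hrq : (2:ℤ) ∣ r * q := hr2'.mul_right q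
    have hna : ¬ (2:ℤ) ∣ a := by
      obtain ⟨s, hs⟩ := hsq; obtain ⟨t, ht⟩ := hrq
      rw [ha, hs, ht]; omega
    have hg2 : ¬ (2:ℤ) ∣ g := fun h => hna (h.trans h1)
    have hcop2 : IsCoprime (2:ℤ) g := (Int.prime_two.coprime_iff_not_dvd).mpr hg2
    have hA : g ∣ q ^ 2 + q + 1 := hcop2.symm.dvd_of_dvd_mul_left hsum
    have hB : g ∣ r * (q + 1) := hcop2.symm.dvd_of_dvd_mul_left hdiff
    have hcopr : IsCoprime r g := by
      rw [hr]; exact hcop2.pow_left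
    have hC : g ∣ q + 1 := hcopr.symm.dvd_of_dvd_mul_left hB
    have hone : g ∣ 1 := by
      have := dvd_sub hA (hC.mul_left q)
      rw [show (1:ℤ) = q ^ 2 + q + 1 - q * (q + 1) by ring]; exact this
    exact hone.trans (one_dvd _)
end

section
/- Assume that every finite nonabelian simple group S admits a, b ∈ oe(S) such that every pair x, y ∈ S with |x| = a, |y| = b generates a nonsolvable subgroup (Theorem B). Then every finite group G satisfying: for all x, y ∈ G there exists g ∈ G with ⟨x, y^g⟩ solvable, is solvable. -/
open Subgroup
open scoped Pointwise

private lemma ord_ker_dvd {H S₁ S₂ : Type*} [Group H] [Group S₁] [Group S₂]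
    (π₁ : H →* S₁) (π₂ : H →* S₂) (h : π₁.ker = π₂.ker) (m : H) :
    orderOf (π₁ m) ∣ orderOf (π₂ m) := by
  rw [orderOf_dvd_iff_pow_eq_one, ← map_pow]
  have : m ^ orderOf (π₂ m) ∈ π₂.ker := by
    rw [MonoidHom.mem_ker, map_pow, pow_orderOf_eq_one]
  rw [← h] at this
  exact this

lemma ord_ker {H S₁ S₂ : Type*} [Group H] [Group S₁] [Group S₂]
    (π₁ : H →* S₁) (π₂ : H →* S₂) (h : π₁.ker = π₂.ker) (m : H) :
    orderOf (π₁ m) = orderOf (π₂ m) :=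
  Nat.dvd_antisymm (ord_ker_dvd π₁ π₂ h m) (ord_ker_dvd π₂ π₁ h.symm m)

lemma solv_map {G G' : Type*} [Group G] [Group G'] (f : G →* G') (K : Subgroup G)
    (h : IsSolvable K) : IsSolvable (K.map f) := by
  haveI : Group.IsSolvable K := h
  exact solvable_of_surjective (f.subgroupMap_surjective K)

lemma finset_inf_normal {H : Type*} [Group H] (s : Finset (Subgroup H))
    (h : ∀ K ∈ s, K.Normal) : (s.inf id).Normal := by
  classical
  induction s using Finset.induction_on with
  | empty => simpa using inferInstanceAs (⊤ : Subgroup H).Normal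
  | @insert K' s' _ ih =>
    rw [Finset.inf_insert]
    haveI h1 : K'.Normal := h K' (Finset.mem_insert_self _ _)
    haveI h2 : (s'.inf id).Normal := ih fun K hK => h K (Finset.mem_insert_of_mem hK)
    constructor
    intro n hn g
    rw [Subgroup.mem_inf] at hn ⊢
    exact ⟨h1.conj_mem _ hn.1 g, h2.conj_mem _ hn.2 g⟩

-- sup with kernel from map-top, and converse
lemma sup_of_map_top {H : Type*} [Group H] (A : Subgroup H) [A.Normal] (X : Subgroup H)
    (h : X.map (QuotientGroup.mk' A) = ⊤) : A ⊔ X = ⊤ := by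
  rw [eq_top_iff]
  intro m _
  have : QuotientGroup.mk' A m ∈ X.map (QuotientGroup.mk' A) := h ▸ Subgroup.mem_top _
  obtain ⟨x, hxX, hx⟩ := this
  have hmem : x⁻¹ * m ∈ A := by
    rw [← QuotientGroup.ker_mk' A, MonoidHom.mem_ker, map_mul, map_inv, hx]
    simp
  have : m = x * (x⁻¹ * m) := by group
  rw [this]
  exact Subgroup.mul_mem _ (Subgroup.mem_sup_right hxX) (Subgroup.mem_sup_left hmem)

lemma map_top_of_sup {H : Type*} [Group H] (A : Subgroup H) [A.Normal] (X : Subgroup H)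
    (h : A ⊔ X = ⊤) : X.map (QuotientGroup.mk' A) = ⊤ := by
  have h1 : (A ⊔ X).map (QuotientGroup.mk' A) = ⊤ := by
    rw [h, ← MonoidHom.range_eq_map, MonoidHom.range_eq_top]
    exact QuotientGroup.mk'_surjective A
  rw [Subgroup.map_sup] at h1
  have h2 : A.map (QuotientGroup.mk' A) = ⊥ := by
    rw [eq_bot_iff]
    rintro _ ⟨a, ha, rfl⟩
    simpa [Subgroup.mem_bot] using (QuotientGroup.eq_one_iff a).mpr ha
  rwa [h2, bot_sup_eq] at h1

lemma sup_inf_eq_top {H : Type*} [Group H]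
    (Hperf : ⁅(⊤ : Subgroup H), (⊤ : Subgroup H)⁆ = ⊤)
    (A : Subgroup H) [A.Normal] (s : Finset (Subgroup H))
    (hn : ∀ K ∈ s, K.Normal) (hs : ∀ K ∈ s, A ⊔ K = ⊤) :
    A ⊔ s.inf id = ⊤ := by
  classical
  induction s using Finset.induction_on with
  | empty => simpa using sup_top_eq A
  | @insert K' s' _ ih =>
    rw [Finset.inf_insert]
    haveI hK' : K'.Normal := hn K' (Finset.mem_insert_self _ _)
    haveI hJ : (s'.inf id).Normal := finset_inf_normal s' fun K hK => hn K (Finset.mem_insert_of_mem hK)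
    have ihs : A ⊔ s'.inf id = ⊤ := ih (fun K hK => hn K (Finset.mem_insert_of_mem hK))
      (fun K hK => hs K (Finset.mem_insert_of_mem hK))
    have hKtop : A ⊔ K' = ⊤ := hs K' (Finset.mem_insert_self _ _)
    -- commutator trick
    have hcomm_le : ⁅K', s'.inf id⁆ ≤ K' ⊓ s'.inf id :=
      le_inf (Subgroup.commutator_le_left _ _) (Subgroup.commutator_le_right _ _)
    have hmap : ⁅K', s'.inf id⁆.map (QuotientGroup.mk' A) = ⊤ := by
      rw [Subgroup.map_commutator, map_top_of_sup A K' hKtop, map_top_of_sup A _ ihs]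
      calc ⁅(⊤ : Subgroup (H ⧸ A)), ⊤⁆ = ⁅Subgroup.map (QuotientGroup.mk' A) ⊤,
            Subgroup.map (QuotientGroup.mk' A) ⊤⁆ := by
            rw [← MonoidHom.range_eq_map, MonoidHom.range_eq_top.mpr (QuotientGroup.mk'_surjective A)]
        _ = Subgroup.map (QuotientGroup.mk' A) ⁅⊤, ⊤⁆ := (Subgroup.map_commutator _ _ _).symm
        _ = ⊤ := by
            rw [Hperf, ← MonoidHom.range_eq_map, MonoidHom.range_eq_top.mpr (QuotientGroup.mk'_surjective A)]
    have := sup_of_map_top A _ hmap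
    rw [eq_top_iff, ← this]
    exact sup_le_sup_left (hcomm_le.trans le_rfl) A |>.trans (sup_le_sup_left le_rfl A) |>.trans
      (le_of_eq rfl)

lemma keyLemma {H : Type*} [Group H]
    (Hperf : ⁅(⊤ : Subgroup H), (⊤ : Subgroup H)⁆ = ⊤)
    (𝒦 : Finset (Subgroup H))
    (hK : ∀ K ∈ 𝒦, K.Normal ∧ K ≠ ⊤ ∧ ∀ L : Subgroup H, L.Normal → K ≤ L → L = K ∨ L = ⊤)
    (u : Subgroup H → H) :
    ∃ x : H, ∀ K ∈ 𝒦, (u K)⁻¹ * x ∈ K := by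
  classical
  induction 𝒦 using Finset.induction_on with
  | empty => exact ⟨1, by simp⟩
  | @insert A s' hA ih =>
    obtain ⟨x₀, hx₀⟩ := ih fun K hKm => hK K (Finset.mem_insert_of_mem hKm)
    obtain ⟨hNa, hTa, hmaxa⟩ := hK A (Finset.mem_insert_self _ _)
    haveI := hNa
    by_cases hcase : ∃ K ∈ s', K ≤ A
    · obtain ⟨Kb, hKbm, hle⟩ := hcase
      obtain ⟨hNb, hTb, hmaxb⟩ := hK Kb (Finset.mem_insert_of_mem hKbm)
      rcases hmaxb A hNa hle with h | h
      · exact absurd (h ▸ hKbm) hA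
      · exact absurd h hTa
    · push_neg at hcase
      have hsup : ∀ K ∈ s', A ⊔ K = ⊤ := by
        intro K hKm
        haveI := (hK K (Finset.mem_insert_of_mem hKm)).1
        rcases hmaxa (A ⊔ K) inferInstance le_sup_left with h | h
        · exact absurd (le_sup_right.trans h.le) (hcase K hKm)
        · exact h
      have hJtop : A ⊔ s'.inf id = ⊤ :=
        sup_inf_eq_top Hperf A s' (fun K hKm => (hK K (Finset.mem_insert_of_mem hKm)).1) hsup
      -- decompose x₀⁻¹ * u A ∈ ⊤ = A ⊔ J as k * j
      have hmem : x₀⁻¹ * u A ∈ (A : Set H) * ((s'.inf id : Subgroup H) : Set H) := by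
        rw [← Subgroup.normal_mul A (s'.inf id), hJtop]; trivial
      obtain ⟨k, hk, j, hj, hkj⟩ := hmem
      refine ⟨x₀ * j, ?_⟩
      intro K hKm
      rcases Finset.mem_insert.mp hKm with rfl | hKm'
      · -- (u K)⁻¹ * (x₀ * j) = j⁻¹ * k⁻¹ * j  (conjugate of k⁻¹)
        have h1 : (u K)⁻¹ * (x₀ * j) = j⁻¹ * k⁻¹ * j := by
          have hkj' : k * j = x₀⁻¹ * u K := hkj
          have : u K = x₀ * (k * j) := by rw [hkj']; group
          rw [this]; group
        rw [h1]
        have := hNa.conj_mem k⁻¹ (inv_mem hk) j⁻¹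
        simpa using this
      · have h1 : (u K)⁻¹ * x₀ ∈ K := hx₀ K hKm'
        have h2 : j ∈ K := by
          have : s'.inf id ≤ K := Finset.inf_le hKm'
          exact this hj
        have : (u K)⁻¹ * (x₀ * j) = ((u K)⁻¹ * x₀) * j := by group
        rw [this]
        exact mul_mem h1 h2

lemma autMap_normal {H : Type*} [Group H] (e : H ≃* H) (L : Subgroup H)
    (hL : L.Normal) : (L.map e.toMonoidHom).Normal := by
  constructor
  rintro n ⟨l, hl, rfl⟩ g
  refine ⟨e.symm g * l * (e.symm g)⁻¹, hL.conj_mem l hl _, ?_⟩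
  simp [mul_assoc]

lemma autMap_eq {H : Type*} [Group H] (e : H ≃* H) (L X : Subgroup H)
    (h : L.map e.toMonoidHom = X) : L = X.comap e.toMonoidHom := by
  subst h
  ext m
  simp only [Subgroup.mem_comap, Subgroup.mem_map]
  constructor
  · exact fun hm => ⟨m, hm, rfl⟩
  · rintro ⟨l, hl, hle⟩
    have : l = m := e.injective hle
    rwa [← this]

lemma autMap_ge {H : Type*} [Group H] (e : H ≃* H) (K L : Subgroup H)
    (h : K.comap e.toMonoidHom ≤ L) : K ≤ L.map e.toMonoidHom := by
  intro k hk
  refine ⟨e.symm k, h ?_, by simp⟩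
  simp only [Subgroup.mem_comap, MulEquiv.coe_toMonoidHom, MulEquiv.apply_symm_apply]
  exact hk


theorem mainAux
    (thmB : ∀ (S : Type) [Group S] [Finite S], IsSimpleGroup S →
      (∃ a b : S, a * b ≠ b * a) →
      ∃ a b : ℕ, (∃ x : S, orderOf x = a) ∧ (∃ y : S, orderOf y = b) ∧
        ∀ x y : S, orderOf x = a → orderOf y = b →
          ¬ IsSolvable ↥(Subgroup.closure {x, y})) :
    ∀ n : ℕ, ∀ (G : Type) [Group G] [Finite G] (N : Subgroup G), N.Normal →
      (∀ x y : G, x ∈ N → y ∈ N →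
        ∃ g : G, IsSolvable ↥(Subgroup.closure {x, g⁻¹ * y * g})) →
      Nat.card ↥N = n → IsSolvable ↥N := by
  intro n
  induction n using Nat.strong_induction_on with
  | _ n IH =>
  intro G _ _ N hNn hhyp hcard
  by_cases hbot : N = ⊥
  · subst hbot
    haveI : Subsingleton (⊥ : Subgroup G) := by
      constructor; rintro ⟨x, hx⟩ ⟨y, hy⟩
      simp only [Subgroup.mem_bot] at hx hy; subst hx; subst hy; rfl
    exact (inferInstance : Group.IsSolvable (⊥ : Subgroup G))
  -- choose minimal M
  have hNS : N ≠ ⊥ ∧ N ≤ N ∧ N.Normal := ⟨hbot, le_rfl, hNn⟩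
  have hne : ((fun K : Subgroup G => Nat.card K) ''
      {K | K ≠ ⊥ ∧ K ≤ N ∧ K.Normal}).Nonempty := ⟨_, ⟨N, hNS, rfl⟩⟩
  obtain ⟨M, hMS, hMcard⟩ : ∃ M ∈ {K : Subgroup G | K ≠ ⊥ ∧ K ≤ N ∧ K.Normal},
      Nat.card M = sInf ((fun K : Subgroup G => Nat.card K) ''
        {K | K ≠ ⊥ ∧ K ≤ N ∧ K.Normal}) := by
    obtain ⟨M, hM, h⟩ := Nat.sInf_mem hne
    exact ⟨M, hM, h⟩
  have hMmin : ∀ K : Subgroup G, K ≠ ⊥ → K ≤ N → K.Normal →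
      Nat.card M ≤ Nat.card K := by
    intro K h1 h2 h3
    rw [hMcard]
    exact Nat.sInf_le ⟨K, ⟨h1, h2, h3⟩, rfl⟩
  obtain ⟨hMbot, hMN, hMnormal⟩ := hMS
  haveI := hMnormal
  by_cases hMsolv : IsSolvable ↥M
  · -- quotient case
    let φ := QuotientGroup.mk' M
    let N' : Subgroup (G ⧸ M) := N.map φ
    haveI hN'n : N'.Normal := hNn.map φ (QuotientGroup.mk'_surjective M)
    have hhyp' : ∀ x y : G ⧸ M, x ∈ N' → y ∈ N' →
        ∃ g : G ⧸ M, IsSolvable ↥(Subgroup.closure {x, g⁻¹ * y * g}) := by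
      rintro _ _ ⟨x, hxN, rfl⟩ ⟨y, hyN, rfl⟩
      obtain ⟨g, hg⟩ := hhyp x y hxN hyN
      refine ⟨φ g, ?_⟩
      have heq : Subgroup.closure {φ x, (φ g)⁻¹ * φ y * φ g} =
          (Subgroup.closure {x, g⁻¹ * y * g}).map φ := by
        rw [MonoidHom.map_closure, Set.image_pair]
        simp
      rw [heq]
      exact solv_map φ _ hg
    let ψ : ↥N →* ↥N' := φ.subgroupMap N
    have hψs : Function.Surjective ψ := φ.subgroupMap_surjective N
    have e1 : Nat.card ↥N = Nat.card (↥N ⧸ ψ.ker) * Nat.card ψ.ker :=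
      Subgroup.card_eq_card_quotient_mul_card_subgroup ψ.ker
    have e2 : Nat.card (↥N ⧸ ψ.ker) = Nat.card ↥N' :=
      Nat.card_congr (QuotientGroup.quotientKerEquivOfSurjective ψ hψs).toEquiv
    obtain ⟨m, hmM, hm1⟩ : ∃ m ∈ M, m ≠ (1 : G) := by
      by_contra h; push_neg at h
      exact hMbot (Subgroup.eq_bot_iff_forall M |>.mpr h)
    haveI : Nontrivial ψ.ker := by
      refine ⟨⟨⟨⟨m, hMN hmM⟩, ?_⟩, 1, ?_⟩⟩
      · rw [MonoidHom.mem_ker]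
        apply Subtype.ext
        exact (QuotientGroup.eq_one_iff m).mpr hmM
      · intro h
        apply hm1
        have := congrArg (fun t => ((t : ψ.ker) : ↥N).1) h
        simpa using this
    have h2 : 2 ≤ Nat.card ψ.ker := Finite.one_lt_card
    have hpos : 0 < Nat.card ↥N' := Nat.card_pos
    have hlt : Nat.card ↥N' < n := by
      rw [← hcard, e1, e2]
      calc Nat.card ↥N' < Nat.card ↥N' * 2 := by omega
        _ ≤ Nat.card ↥N' * Nat.card ψ.ker := Nat.mul_le_mul_left _ h2
    have hsolvN' : IsSolvable ↥N' := IH _ hlt (G ⧸ M) N' hN'n hhyp' rfl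
    have hkermem : ∀ x : ψ.ker, ((x : ↥N) : G) ∈ M := by
      rintro ⟨⟨x, hxN⟩, hx⟩
      rw [MonoidHom.mem_ker] at hx
      have : φ x = 1 := congrArg Subtype.val hx
      exact (QuotientGroup.eq_one_iff x).mp this
    let ι : ↥ψ.ker →* ↥M :=
      { toFun := fun x => ⟨((x : ↥N) : G), hkermem x⟩
        map_one' := rfl
        map_mul' := fun _ _ => rfl }
    have hιinj : Function.Injective ι := by
      intro p q h
      have h2 : (ι p).1 = (ι q).1 := congrArg Subtype.val h
      exact Subtype.ext (Subtype.ext h2)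
    haveI : Group.IsSolvable ↥M := hMsolv
    haveI : Group.IsSolvable ↥ψ.ker := solvable_of_solvable_injective hιinj
    haveI : Group.IsSolvable ↥N' := hsolvN'
    exact solvable_of_ker_le_range ψ.ker.subtype ψ (by rw [Subgroup.range_subtype])
  · -- contradiction case
    exfalso
    obtain ⟨m₀, hm₀M, hm₀1⟩ : ∃ m ∈ M, m ≠ (1 : G) := by
      by_contra h; push_neg at h
      exact hMbot (Subgroup.eq_bot_iff_forall M |>.mpr h)
    haveI hMnontriv : Nontrivial ↥M := ⟨⟨⟨m₀, hm₀M⟩, 1, fun h => hm₀1 (congrArg Subtype.val h)⟩⟩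
    -- M is perfect
    have hMM : ⁅M, M⁆ = M := by
      have hle : ⁅M, M⁆ ≤ M := Subgroup.commutator_le_right M M
      haveI : ⁅M, M⁆.Normal := Subgroup.commutator_normal M M
      by_cases hcb : ⁅M, M⁆ = ⊥
      · exfalso
        apply hMsolv
        have hcent : M ≤ Subgroup.centralizer (M : Set G) :=
          Subgroup.commutator_eq_bot_iff_le_centralizer.mp hcb
        apply isSolvable_of_comm
        intro a b
        apply Subtype.ext
        exact (Subgroup.mem_centralizer_iff.mp (hcent b.2)) a.1 a.2
      · exact le_antisymm hle
          (le_of_eq (Subgroup.eq_of_le_of_card_ge hle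
            (hMmin _ hcb (hle.trans hMN) inferInstance)).symm)
    have Hperf : ⁅(⊤ : Subgroup ↥M), (⊤ : Subgroup ↥M)⁆ = ⊤ := by
      apply Subgroup.map_injective M.subtype_injective
      rw [Subgroup.map_commutator, ← MonoidHom.range_eq_map, Subgroup.range_subtype]
      exact hMM
    -- maximal normal subgroup K₀ of ↥M
    have hbddT : BddAbove ((fun K : Subgroup ↥M => Nat.card K) ''
        {K | K.Normal ∧ K ≠ ⊤}) := by
      refine ⟨Nat.card ↥M, ?_⟩
      rintro _ ⟨K, _, rfl⟩
      exact Subgroup.card_le_card_group K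
    have hneT : ((fun K : Subgroup ↥M => Nat.card K) ''
        {K | K.Normal ∧ K ≠ ⊤}).Nonempty :=
      ⟨_, ⟨⊥, ⟨inferInstance, bot_ne_top⟩, rfl⟩⟩
    obtain ⟨K₀, hK₀T, hK₀card⟩ : ∃ K₀ ∈ {K : Subgroup ↥M | K.Normal ∧ K ≠ ⊤},
        Nat.card K₀ = sSup ((fun K : Subgroup ↥M => Nat.card K) ''
          {K | K.Normal ∧ K ≠ ⊤}) := by
      obtain ⟨K, hK, h⟩ := Nat.sSup_mem hneT hbddT
      exact ⟨K, hK, h⟩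
    obtain ⟨hK₀n, hK₀ne⟩ := hK₀T
    haveI := hK₀n
    have hmax₀ : ∀ L : Subgroup ↥M, L.Normal → K₀ ≤ L → L = K₀ ∨ L = ⊤ := by
      intro L hLn hle
      by_cases hLt : L = ⊤
      · exact Or.inr hLt
      · left
        refine (Subgroup.eq_of_le_of_card_ge hle ?_).symm
        rw [hK₀card]
        exact le_csSup hbddT ⟨L, ⟨hLn, hLt⟩, rfl⟩
    -- S := M / K₀ is a nontrivial simple group
    obtain ⟨m₁, hm₁⟩ : ∃ m : ↥M, m ∉ K₀ := by
      by_contra h; push_neg at h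
      exact hK₀ne (eq_top_iff.mpr fun x _ => h x)
    haveI hSnt : Nontrivial (↥M ⧸ K₀) :=
      ⟨⟨QuotientGroup.mk m₁, 1, fun h => hm₁ ((QuotientGroup.eq_one_iff m₁).mp h)⟩⟩
    have hmapbot : Subgroup.map (QuotientGroup.mk' K₀) K₀ = ⊥ := by
      rw [eq_bot_iff]
      rintro _ ⟨k, hk, rfl⟩
      simpa [Subgroup.mem_bot] using (QuotientGroup.eq_one_iff k).mpr hk
    haveI hSsimple : IsSimpleGroup (↥M ⧸ K₀) := by
      constructor
      intro Nbar hNbar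
      have hK₀le : K₀ ≤ Nbar.comap (QuotientGroup.mk' K₀) := by
        intro k hk
        show QuotientGroup.mk' K₀ k ∈ Nbar
        have : QuotientGroup.mk' K₀ k = 1 := (QuotientGroup.eq_one_iff k).mpr hk
        rw [this]; exact Nbar.one_mem
      have hmc := Subgroup.map_comap_eq_self_of_surjective
        (QuotientGroup.mk'_surjective K₀) Nbar
      rcases hmax₀ _ (hNbar.comap _) hK₀le with h | h
      · left; rw [← hmc, h, hmapbot]
      · right; rw [← hmc, h, ← MonoidHom.range_eq_map,
          MonoidHom.range_eq_top.mpr (QuotientGroup.mk'_surjective K₀)]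
    -- the twisted projections
    let π : ↥M →* ↥M ⧸ K₀ := QuotientGroup.mk' K₀
    let cj : G →* MulAut ↥M := MulAut.conjNormal
    let pg : G → (↥M →* ↥M ⧸ K₀) := fun g => π.comp (cj g).toMonoidHom
    have hpgs : ∀ g, Function.Surjective (pg g) := fun g =>
      (QuotientGroup.mk'_surjective K₀).comp (cj g).surjective
    have hkerc : ∀ g : G, (pg g).ker = K₀.comap (cj g).toMonoidHom := by
      intro g
      ext m
      simp only [pg, MonoidHom.mem_ker, MonoidHom.comp_apply, Subgroup.mem_comap]
      exact QuotientGroup.eq_one_iff _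
    have hKprop : ∀ g : G, (pg g).ker.Normal ∧ (pg g).ker ≠ ⊤ ∧
        ∀ L : Subgroup ↥M, L.Normal → (pg g).ker ≤ L → L = (pg g).ker ∨ L = ⊤ := by
      intro g
      refine ⟨inferInstance, ?_, ?_⟩
      · intro htop
        obtain ⟨s, hs⟩ := exists_ne (1 : ↥M ⧸ K₀)
        obtain ⟨m, rfl⟩ := hpgs g s
        apply hs
        have : m ∈ (pg g).ker := htop ▸ Subgroup.mem_top m
        exact this
      · intro L hLn hle
        have hK₀L' : K₀ ≤ L.map (cj g).toMonoidHom :=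
          autMap_ge (cj g) K₀ L ((hkerc g) ▸ hle)
        have hLn' : (L.map (cj g).toMonoidHom).Normal := autMap_normal (cj g) L hLn
        rcases hmax₀ _ hLn' hK₀L' with h | h
        · left
          rw [hkerc g]
          exact autMap_eq (cj g) L K₀ h
        · right
          have := autMap_eq (cj g) L (⊤ : Subgroup ↥M) h
          rwa [Subgroup.comap_top] at this
    -- the finite set of kernels
    have hfin : (Set.range fun g : G => (pg g).ker).Finite := Set.finite_range _
    have h𝒦 : ∀ K ∈ hfin.toFinset, K.Normal ∧ K ≠ ⊤ ∧
        ∀ L : Subgroup ↥M, L.Normal → K ≤ L → L = K ∨ L = ⊤ := by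
      intro K hK
      obtain ⟨g, rfl⟩ := hfin.mem_toFinset.mp hK
      exact hKprop g
    -- apply Theorem B
    have hnab : ∃ a b : ↥M ⧸ K₀, a * b ≠ b * a := by
      by_contra h; push_neg at h
      have hperfS : ⁅(⊤ : Subgroup (↥M ⧸ K₀)), (⊤ : Subgroup (↥M ⧸ K₀))⁆ = ⊤ := by
        have : Subgroup.map π ⁅(⊤ : Subgroup ↥M), (⊤ : Subgroup ↥M)⁆ = ⁅(⊤ : Subgroup (↥M ⧸ K₀)), (⊤ : Subgroup (↥M ⧸ K₀))⁆ := by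
          rw [Subgroup.map_commutator, ← MonoidHom.range_eq_map,
            MonoidHom.range_eq_top.mpr (QuotientGroup.mk'_surjective K₀)]
        rw [← this, Hperf, ← MonoidHom.range_eq_map,
          MonoidHom.range_eq_top.mpr (QuotientGroup.mk'_surjective K₀)]
      have hbot' : ⁅(⊤ : Subgroup (↥M ⧸ K₀)), (⊤ : Subgroup (↥M ⧸ K₀))⁆ = ⊥ :=
        Subgroup.commutator_eq_bot_iff_le_centralizer.mpr
          (fun z _ => Subgroup.mem_centralizer_iff.mpr fun g _ => h g z)
      rw [hperfS] at hbot'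
      exact bot_ne_top (α := Subgroup (↥M ⧸ K₀)) hbot'.symm
    obtain ⟨a, b, ⟨sa, hsa⟩, ⟨sb, hsb⟩, hnsolv⟩ := thmB (↥M ⧸ K₀) hSsimple hnab
    -- construct elements with constant order in all twisted projections
    have build : ∀ c : ℕ, (∃ s : ↥M ⧸ K₀, orderOf s = c) →
        ∃ x : ↥M, ∀ g : G, orderOf (pg g x) = c := by
      rintro c ⟨s, hs⟩
      classical
      let u : Subgroup ↥M → ↥M := fun K =>
        if h : ∃ m : ↥M, ∀ g : G, (pg g).ker = K → orderOf (pg g m) = c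
        then h.choose else 1
      have hu : ∀ K ∈ hfin.toFinset,
          ∃ m : ↥M, ∀ g : G, (pg g).ker = K → orderOf (pg g m) = c := by
        intro K hK
        obtain ⟨g₀, hg₀⟩ := hfin.mem_toFinset.mp hK
        obtain ⟨m, hm⟩ := hpgs g₀ s
        refine ⟨m, fun g hg => ?_⟩
        rw [ord_ker (pg g) (pg g₀) (by rw [hg, ← hg₀]) m, hm, hs]
      obtain ⟨x, hx⟩ := keyLemma Hperf hfin.toFinset h𝒦 u
      refine ⟨x, fun g => ?_⟩
      have hKm : (pg g).ker ∈ hfin.toFinset := hfin.mem_toFinset.mpr ⟨g, rfl⟩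
      have hex := hu _ hKm
      have hdef : ∀ g' : G, (pg g').ker = (pg g).ker →
          orderOf (pg g' (u (pg g).ker)) = c := by
        have : u (pg g).ker = hex.choose := dif_pos hex
        rw [this]
        exact hex.choose_spec
      have hxK : (u (pg g).ker)⁻¹ * x ∈ (pg g).ker := hx _ hKm
      have heq : pg g x = pg g (u (pg g).ker) := by
        have h1 := MonoidHom.mem_ker.mp hxK
        rw [map_mul, map_inv] at h1
        exact (inv_mul_eq_one.mp h1).symm
      rw [heq]
      exact hdef g rfl
    obtain ⟨x, hx⟩ := build a ⟨sa, hsa⟩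
    obtain ⟨y, hy⟩ := build b ⟨sb, hsb⟩
    -- the contradiction
    obtain ⟨g, hg⟩ := hhyp x.1 y.1 (hMN x.2) (hMN y.2)
    let z : ↥M := (cj g⁻¹) y
    have hz : (z : G) = g⁻¹ * (y : G) * g := by
      show ((MulAut.conjNormal g⁻¹ y : ↥M) : G) = g⁻¹ * (y : G) * g
      rw [MulAut.conjNormal_apply]
      group
    have hordx : orderOf (π x) = a := by
      have h1 := hx 1
      have h2 : pg 1 x = π x := by
        show π ((cj 1) x) = π x
        rw [map_one]
        rfl
      rwa [h2] at h1
    have hordz : orderOf (π z) = b := hy g⁻¹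
    have hC : IsSolvable ↥(Subgroup.closure ({x, z} : Set ↥M)) := by
      have hmapC : (Subgroup.closure ({x, z} : Set ↥M)).map M.subtype =
          Subgroup.closure {(x : G), g⁻¹ * (y : G) * g} := by
        rw [MonoidHom.map_closure, Set.image_pair]
        simp only [Subgroup.coe_subtype, hz]
      haveI := hg
      haveI hsolv' : Group.IsSolvable ↥((Subgroup.closure ({x, z} : Set ↥M)).map M.subtype) := by
        rw [hmapC]; exact hg
      exact solvable_of_solvable_injective
        (f := (Subgroup.equivMapOfInjective _ M.subtype M.subtype_injective).toMonoidHom)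
        (by rw [MulEquiv.coe_toMonoidHom]
            exact (Subgroup.equivMapOfInjective _ M.subtype M.subtype_injective).injective)
    have hCS : IsSolvable ↥(Subgroup.closure ({π x, π z} : Set (↥M ⧸ K₀))) := by
      have h1 := solv_map π _ hC
      rwa [MonoidHom.map_closure, Set.image_pair] at h1
    exact hnsolv (π x) (π z) hordx hordz hCS

theorem stmt_17
    (thmB : ∀ (S : Type) [Group S] [Finite S], IsSimpleGroup S →
      (∃ a b : S, a * b ≠ b * a) →
      ∃ a b : ℕ, (∃ x : S, orderOf x = a) ∧ (∃ y : S, orderOf y = b) ∧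
        ∀ x y : S, orderOf x = a → orderOf y = b →
          ¬ IsSolvable ↥(Subgroup.closure {x, y}))
    (G : Type) [Group G] [Finite G]
    (hG : ∀ x y : G, ∃ g : G, IsSolvable ↥(Subgroup.closure {x, g⁻¹ * y * g})) :
    IsSolvable G := by
  haveI h : Group.IsSolvable ↥(⊤ : Subgroup G) :=
    mainAux thmB (Nat.card ↥(⊤ : Subgroup G)) G ⊤ inferInstance
      (fun x y _ _ => hG x y) rfl
  exact solvable_of_surjective (f := Subgroup.topEquiv.toMonoidHom)
    (by rw [MulEquiv.coe_toMonoidHom]; exact Subgroup.topEquiv.surjective)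
end
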